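/- Let c′ be a symmetric N×N complex matrix such that c′_{nm} − c′_{n+1,m} ∈ ℤ for all 1 ≤ n ≤ N−1 and 1 ≤ m ≤ N. For 1 ≤ n ≤ N set h_n(γ) = ∑_{j=1}^{n} γ_{nj} − ∑_{j=1}^{n−1} γ_{n−1,j}, and for 1 ≤ n ≤ N−1 set d_n = 2n − c′_{nn} + 2c′_{n,n+1} − c′_{n+1,n+1} − 1 (an integer) and χ′_n = (−1)^{d_n}. Define w′ : ℂ^Γ → ℂ by w′(γ) = exp(−(πi/(ω₁ω₂)) ∑_{n,m=1}^{N} c′_{nm} h_n(γ) h_m(γ)) · ∏_{n=1}^{N−1} exp((πi/(ω₁ω₂)) ∑_{p=1}^{n} γ_{np}² + (π(ω₁+ω₂) d_n/(ω₁ω₂)) ∑_{p=1}^{n} γ_{np}). Then w′ is a Whittaker vector: for every 1 ≤ n ≤ N−1, ϱ(E_{n+1,n}) w′ = (χ′_n/(q − q^{−1})) · ϱ(K_n)^{−1} ∘ ∏_{m=1}^{N} ϱ(K_m)^{c′_{nm} − c′_{n+1,m}} applied to w′, at every point γ at which all sinh-denominators occurring are nonzero. -/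

import Mathlib

noncomputable section

open Finset

/-- A point of the variable space: an assignment of a complex number to each
index pair `(n, j)` (with `γ (N, j)` playing the role of the fixed top-level
parameters). -/
abbrev Pt : Type := ℕ × ℕ → ℂ

/-- Operators acting on functions of the variables. -/
abbrev Op : Type := (Pt → ℂ) → (Pt → ℂ)

/-- Shift the coordinate `γ (n, j)` by `c`. -/
def shift (n j : ℕ) (c : ℂ) (γ : Pt) : Pt :=
  fun p => if p = (n, j) then γ p + c else γ p

/-- The quantum deformation parameter `q = exp(2πiω₁/ω₂)`. -/
def qpar (w1 w2 : ℂ) : ℂ := Complex.exp (2 * (Real.pi : ℂ) * Complex.I * w1 / w2)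

/-- The multiplier of the Cartan operator `ϱ(K_n)`. -/
def kfac (w2 : ℂ) (n : ℕ) (γ : Pt) : ℂ :=
  Complex.exp ((2 * (Real.pi : ℂ) / w2) *
    ((∑ j ∈ Finset.Icc 1 n, γ (n, j)) - ∑ j ∈ Finset.Icc 1 (n - 1), γ (n - 1, j)))

/-- The Cartan operator `ϱ(K_n)`. -/
def qK (w2 : ℂ) (n : ℕ) : Op := fun f γ => kfac w2 n γ * f γ

/-- The inverse Cartan operator `ϱ(K_n)⁻¹`. -/
def qKinv (w2 : ℂ) (n : ℕ) : Op := fun f γ => (kfac w2 n γ)⁻¹ * f γ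

/-- The raising operator `ϱ(E_{n,n+1})`. -/
def qE (w1 w2 : ℂ) (n : ℕ) : Op := fun f γ =>
  (2 * Complex.I * Complex.exp ((Real.pi : ℂ) * Complex.I * w1 * ((n : ℂ) - 1) / w2) /
      Complex.sin (2 * (Real.pi : ℂ) * w1 / w2)) *
    ∑ j ∈ Finset.Icc 1 n,
      ((∏ r ∈ Finset.Icc 1 (n + 1),
            Complex.sinh ((2 * (Real.pi : ℂ) / w2) *
              (γ (n, j) - γ (n + 1, r) - Complex.I * w1 / 2))) /
          ∏ s ∈ (Finset.Icc 1 n).erase j,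
            Complex.sinh ((2 * (Real.pi : ℂ) / w2) * (γ (n, j) - γ (n, s)))) *
        f (shift n j (-(Complex.I * w1)) γ)

/-- The lowering operator `ϱ(E_{n+1,n})`. -/
def qF (w1 w2 : ℂ) (n : ℕ) : Op := fun f γ =>
  -(Complex.I * Complex.exp (-((Real.pi : ℂ) * Complex.I * w1 * ((n : ℂ) - 1)) / w2) /
      (2 * Complex.sin (2 * (Real.pi : ℂ) * w1 / w2))) *
    ∑ j ∈ Finset.Icc 1 n,
      ((∏ r ∈ Finset.Icc 1 (n - 1),
            Complex.sinh ((2 * (Real.pi : ℂ) / w2) *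
              (γ (n, j) - γ (n - 1, r) + Complex.I * w1 / 2))) /
          ∏ s ∈ (Finset.Icc 1 n).erase j,
            Complex.sinh ((2 * (Real.pi : ℂ) / w2) * (γ (n, j) - γ (n, s)))) *
        f (shift n j (Complex.I * w1) γ)

/-- Genericity: all sinh-denominators, also at arguments shifted by `iω₁·a` with
`|a| ≤ d`, are nonzero. -/
def QGeneric (N : ℕ) (w1 w2 : ℂ) (d : ℕ) (γ : Pt) : Prop :=
  ∀ m j s, 1 ≤ m → m ≤ N → 1 ≤ j → j ≤ m → 1 ≤ s → s ≤ m → j ≠ s →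
    ∀ a : ℤ, a.natAbs ≤ d →
      Complex.sinh ((2 * (Real.pi : ℂ) / w2) *
        (γ (m, j) - γ (m, s) + Complex.I * w1 * (a : ℂ))) ≠ 0

/-- The function `h_n(γ) = ∑_{j=1}^n γ_{nj} − ∑_{j=1}^{n−1} γ_{n−1,j}`. -/
def hfun (n : ℕ) (γ : Pt) : ℂ :=
  (∑ j ∈ Finset.Icc 1 n, γ (n, j)) - ∑ j ∈ Finset.Icc 1 (n - 1), γ (n - 1, j)

/-- The quantum Whittaker vector `w′`. -/
def wq (N : ℕ) (w1 w2 : ℂ) (c' : ℕ → ℕ → ℂ) (d : ℕ → ℤ) (γ : Pt) : ℂ :=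
  Complex.exp (-((Real.pi : ℂ) * Complex.I / (w1 * w2)) *
      ∑ n ∈ Finset.Icc 1 N, ∑ m ∈ Finset.Icc 1 N, c' n m * hfun n γ * hfun m γ) *
    ∏ n ∈ Finset.Icc 1 (N - 1),
      Complex.exp (((Real.pi : ℂ) * Complex.I / (w1 * w2)) *
          (∑ p ∈ Finset.Icc 1 n, (γ (n, p)) ^ 2) +
        ((Real.pi : ℂ) * (w1 + w2) * ((d n : ℤ) : ℂ) / (w1 * w2)) *
          ∑ p ∈ Finset.Icc 1 n, γ (n, p))

/-!
Shifting `γ_{nj}` by `iω₁` multiplies `w′` by an explicit exponential: the Gaussian factor gives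
`e^{-2πγ_{nj}/ω₂}`, the quadratic form `∑ c′_{ab} h_a h_b` gives `∏_m ϱ(K_m)^{c′_{nm} - c′_{n+1,m}}`
(by symmetry of `c′`), and the constants left over combine, by the choice of `d_n`, into
`(-1)^{d_n} e^{2πiω₁(n-1)/ω₂}`. What remains of `ϱ(E_{n+1,n}) w′` is the sum
`∑_j ∏_r sinh(…) / ∏_{s≠j} sinh(…) · e^{-2πγ_{nj}/ω₂}`; in the variables `A_j = e^{4πγ_{nj}/ω₂}`
it is the partial-fraction expansion of a polynomial of degree `n - 1` over `n` distinct nodes, and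
Lagrange interpolation at `0` evaluates it to `ϱ(K_n)⁻¹` times a constant.
-/

open Complex
open scoped Real

open Polynomial Lagrange in
theorem sum_eval_div_mul_prod_sub {F ι : Type*} [Field F] [DecidableEq ι] {s : Finset ι}
    {v : ι → F} (hvs : Set.InjOn v s) (hv : ∀ i ∈ s, v i ≠ 0) {f : F[X]} (hf : f.degree < #s) :
    ∑ i ∈ s, f.eval (v i) / (v i * ∏ j ∈ s.erase i, (v i - v j)) =
      -f.eval 0 / ∏ i ∈ s, -v i := by
  have hprod : ∏ i ∈ s, -v i ≠ 0 := prod_ne_zero_iff.2 fun i hi => neg_ne_zero.2 (hv i hi)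
  have h := eval_interpolate_not_at_node (fun i => f.eval (v i)) (x := 0)
    fun i hi => (hv i hi).symm
  rw [← eq_interpolate hvs hf, eval_nodal] at h
  rw [eq_div_iff hprod, h, sum_mul, mul_comm, sum_mul, ← sum_neg_distrib]
  refine sum_congr rfl fun i _ => ?_
  simp only [zero_sub, nodalWeight, prod_inv_distrib]
  ring

open Polynomial Lagrange in
theorem sum_prod_sub_div_mul_prod_sub {F ι κ : Type*} [Field F] [DecidableEq ι] {s : Finset ι}
    {t : Finset κ} (hts : #t + 1 = #s) {v : ι → F} (hvs : Set.InjOn v s)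
    (hv : ∀ i ∈ s, v i ≠ 0) (c : F) (b : κ → F) :
    ∑ i ∈ s, (∏ r ∈ t, (c * v i - b r)) / (v i * ∏ j ∈ s.erase i, (v i - v j)) =
      (∏ r ∈ t, b r) / ∏ i ∈ s, v i := by
  set f : F[X] := ∏ r ∈ t, (C c * X - C (b r))
  have hdeg : f.natDegree ≤ #t := (natDegree_prod_le _ _).trans <|
    (sum_le_card_nsmul t _ 1 fun r _ => by compute_degree).trans (by simp)
  have hf : f.degree < #s :=
    (degree_le_of_natDegree_le hdeg).trans_lt (by exact_mod_cast (by omega : #t < #s))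
  have := sum_eval_div_mul_prod_sub hvs hv hf
  simp only [f, eval_prod, eval_sub, eval_mul, eval_C, eval_X, mul_zero, zero_sub, prod_neg] at this
  rw [this, ← hts, pow_succ]
  field_simp

theorem sinh_sub_eq_div_exp (u v : ℂ) :
    sinh (u - v) = (exp u ^ 2 - exp v ^ 2) / (2 * exp u * exp v) := by
  rw [sinh, neg_sub, exp_sub, exp_sub]
  field_simp

theorem sum_prod_sinh_div_prod_sinh_mul_exp {ι κ : Type*} [DecidableEq ι] {s : Finset ι}
    {t : Finset κ} (hts : #t + 1 = #s) (k τ : ℂ) (x : ι → ℂ) (y : κ → ℂ)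
    (hx : ∀ i ∈ s, ∀ j ∈ s, i ≠ j → sinh (k * (x i - x j)) ≠ 0) :
    ∑ i ∈ s, (∏ r ∈ t, sinh (k * (x i - y r + τ))) / (∏ j ∈ s.erase i, sinh (k * (x i - x j))) *
        exp (-(k * x i)) =
      exp (-(k * τ) * #t) * exp (k * (∑ r ∈ t, y r - ∑ i ∈ s, x i)) := by
  set a : ι → ℂ := fun i => exp (k * x i)
  set b : κ → ℂ := fun r => exp (k * y r)
  set c : ℂ := exp (k * τ)
  have hsinh_x : ∀ i j, sinh (k * (x i - x j)) = (a i ^ 2 - a j ^ 2) / (2 * a i * a j) :=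
    fun i j => by rw [mul_sub, sinh_sub_eq_div_exp]
  have hsinh_xy : ∀ i r, sinh (k * (x i - y r + τ)) =
      (c ^ 2 * a i ^ 2 - b r ^ 2) / (2 * (c * a i) * b r) := fun i r => by
    rw [show k * (x i - y r + τ) = (k * τ + k * x i) - k * y r by ring, sinh_sub_eq_div_exp,
      exp_add, mul_pow]
  have hinj : Set.InjOn (fun i => a i ^ 2) s := fun i hi j hj hij => by
    by_contra hne
    exact hx i hi j hj hne (by simp only [hsinh_x, hij, sub_self, zero_div])
  have hsep : ∀ i ∈ s, ∏ j ∈ s.erase i, (a i ^ 2 - a j ^ 2) ≠ 0 := fun i hi =>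
    prod_ne_zero_iff.2 fun j hj => sub_ne_zero.2 fun h =>
      (ne_of_mem_erase hj) (hinj (mem_of_mem_erase hj) hi h.symm)
  have hterm : ∀ i ∈ s,
      (∏ r ∈ t, sinh (k * (x i - y r + τ))) / (∏ j ∈ s.erase i, sinh (k * (x i - x j))) *
        exp (-(k * x i)) =
      (∏ j ∈ s, a j) / (c ^ #t * ∏ r ∈ t, b r) *
        ((∏ r ∈ t, (c ^ 2 * a i ^ 2 - b r ^ 2)) /
          (a i ^ 2 * ∏ j ∈ s.erase i, (a i ^ 2 - a j ^ 2))) := by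
    intro i hi
    have hsep_i := hsep i hi
    have ha : a i ≠ 0 := exp_ne_zero _
    have hc : c ≠ 0 := exp_ne_zero _
    have hb : ∏ r ∈ t, b r ≠ 0 := prod_ne_zero_iff.2 fun r _ => exp_ne_zero _
    rw [exp_neg]
    simp only [hsinh_x, hsinh_xy, prod_div_distrib, prod_mul_distrib, prod_const,
      card_erase_of_mem hi, ← hts, Nat.add_sub_cancel, ← mul_prod_erase s a hi]
    field_simp
    ring
  have hc : exp (-(k * τ) * #t) = (c ^ #t)⁻¹ := by rw [neg_mul, exp_neg, mul_comm, exp_nat_mul]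
  have hab : exp (k * (∑ r ∈ t, y r - ∑ i ∈ s, x i)) = (∏ r ∈ t, b r) / ∏ i ∈ s, a i := by
    rw [mul_sub, mul_sum, mul_sum, exp_sub, exp_sum, exp_sum]
  have ha : ∏ i ∈ s, a i ≠ 0 := prod_ne_zero_iff.2 fun i _ => exp_ne_zero _
  have hb : ∏ r ∈ t, b r ≠ 0 := prod_ne_zero_iff.2 fun r _ => exp_ne_zero _
  rw [sum_congr rfl hterm, ← mul_sum, sum_prod_sub_div_mul_prod_sub hts hinj
    (fun i _ => pow_ne_zero 2 (exp_ne_zero _)), hc, hab, prod_pow, prod_pow]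
  field_simp

theorem sum_comp_shift (g : ℂ → ℂ) {n j : ℕ} (hj : j ∈ Icc 1 n) (k : ℕ) (c : ℂ) (γ : Pt) :
    ∑ p ∈ Icc 1 k, g (shift n j c γ (k, p)) =
      ∑ p ∈ Icc 1 k, g (γ (k, p)) + if k = n then g (γ (n, j) + c) - g (γ (n, j)) else 0 := by
  by_cases hk : k = n
  · subst hk
    have hrest : ∀ p ∈ (Icc 1 k).erase j, shift k j c γ (k, p) = γ (k, p) := fun p hp => by
      simp [shift, ne_of_mem_erase hp]
    rw [if_pos rfl, ← add_sum_erase _ _ hj, ← add_sum_erase _ _ hj, sum_congr rfl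
      fun p hp => congrArg g (hrest p hp), shift, if_pos rfl]
    ring
  · simp [shift, hk]

theorem hfun_shift {n j : ℕ} (hj : j ∈ Icc 1 n) (m : ℕ) (c : ℂ) (γ : Pt) :
    hfun m (shift n j c γ) =
      hfun m γ + ((if m = n then c else 0) - if m = n + 1 then c else 0) := by
  have hsum := fun k => sum_comp_shift id hj k c γ
  have hm : m - 1 = n ↔ m = n + 1 := by have := mem_Icc.1 hj; omega
  simp only [id, add_sub_cancel_left] at hsum
  simp only [hfun, hsum, hm]
  ring

theorem sum_ite_sub_ite_mul {R : Type*} [CommRing R] {S : Finset ℕ} {n₀ n₁ : ℕ} (h₀ : n₀ ∈ S)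
    (h₁ : n₁ ∈ S) (c : R) (f : ℕ → R) :
    ∑ a ∈ S, ((if a = n₀ then c else 0) - (if a = n₁ then c else 0)) * f a =
      c * (f n₀ - f n₁) := by
  simp [sub_mul, ite_mul, sum_sub_distrib, h₀, h₁, mul_sub]

theorem sum_sum_mul_add_ite_sub_ite {R : Type*} [CommRing R] {S : Finset ℕ} {n₀ n₁ : ℕ}
    (h₀ : n₀ ∈ S) (h₁ : n₁ ∈ S) {F : ℕ → ℕ → R} (hF : ∀ a ∈ S, ∀ b ∈ S, F a b = F b a)
    (h : ℕ → R) (c : R) :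
    ∑ a ∈ S, ∑ b ∈ S, F a b * (h a + ((if a = n₀ then c else 0) - if a = n₁ then c else 0)) *
        (h b + ((if b = n₀ then c else 0) - if b = n₁ then c else 0)) =
      ∑ a ∈ S, ∑ b ∈ S, F a b * h a * h b + 2 * c * ∑ b ∈ S, (F n₀ b - F n₁ b) * h b +
        c ^ 2 * (F n₀ n₀ - 2 * F n₀ n₁ + F n₁ n₁) := by
  set v : ℕ → R := fun a => (if a = n₀ then c else 0) - if a = n₁ then c else 0
  have hv : ∀ f : ℕ → R, ∑ a ∈ S, v a * f a = c * (f n₀ - f n₁) :=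
    sum_ite_sub_ite_mul h₀ h₁ c
  have hexpand : ∀ a ∈ S, ∀ b ∈ S, F a b * (h a + v a) * (h b + v b) = F a b * h a * h b +
      v a * (F a b * h b) + v b * (F b a * h a) + v a * (v b * F a b) := fun a ha b hb => by
    rw [hF b hb a ha]
    ring
  rw [sum_congr rfl fun a ha => sum_congr rfl fun b hb => hexpand a ha b hb]
  simp only [sum_add_distrib, ← mul_sum]
  rw [sum_comm (f := fun a b => v b * (F b a * h a))]
  simp only [← mul_sum, hv, hF n₁ h₁ n₀ h₀, sub_mul, sum_sub_distrib]
  ring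

theorem wq_shift {N : ℕ} {w1 w2 : ℂ} (h1 : w1 ≠ 0) (h2 : w2 ≠ 0) {c' : ℕ → ℕ → ℂ}
    (hsym : ∀ a ∈ Icc 1 N, ∀ b ∈ Icc 1 N, c' a b = c' b a) {n : ℕ} (hn : n ∈ Icc 1 (N - 1))
    {e : ℕ → ℤ} (he : ∀ m ∈ Icc 1 N, (e m : ℂ) = c' n m - c' (n + 1) m) {d : ℕ → ℤ}
    (hd : (d n : ℂ) = 2 * n - c' n n + 2 * c' n (n + 1) - c' (n + 1) (n + 1) - 1)
    {j : ℕ} (hj : j ∈ Icc 1 n) (γ : Pt) :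
    wq N w1 w2 c' d (shift n j (I * w1) γ) =
      exp (-(2 * π / w2 * γ (n, j))) * ((-1) ^ d n * exp (2 * π * I * w1 * (n - 1) / w2) *
        (∏ m ∈ Icc 1 N, kfac w2 m γ ^ e m) * wq N w1 w2 c' d γ) := by
  have hn₀ : n ∈ Icc 1 N := by simp only [mem_Icc] at hn ⊢; omega
  have hn₁ : n + 1 ∈ Icc 1 N := by simp only [mem_Icc] at hn ⊢; omega
  set c := I * w1
  have hQ : ∑ a ∈ Icc 1 N, ∑ b ∈ Icc 1 N,
        c' a b * hfun a (shift n j c γ) * hfun b (shift n j c γ) =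
      ∑ a ∈ Icc 1 N, ∑ b ∈ Icc 1 N, c' a b * hfun a γ * hfun b γ +
        2 * c * ∑ b ∈ Icc 1 N, (c' n b - c' (n + 1) b) * hfun b γ +
        c ^ 2 * (c' n n - 2 * c' n (n + 1) + c' (n + 1) (n + 1)) := by
    simp only [hfun_shift hj]
    exact sum_sum_mul_add_ite_sub_ite hn₀ hn₁ hsym _ c
  have hsq := fun k => sum_comp_shift (· ^ 2) hj k c γ
  have hid := fun k => sum_comp_shift id hj k c γ
  simp only [id] at hsq hid
  have hL : ∀ k, π * I / (w1 * w2) * ∑ p ∈ Icc 1 k, shift n j c γ (k, p) ^ 2 +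
      π * (w1 + w2) * d k / (w1 * w2) * ∑ p ∈ Icc 1 k, shift n j c γ (k, p) =
      π * I / (w1 * w2) * ∑ p ∈ Icc 1 k, γ (k, p) ^ 2 +
        π * (w1 + w2) * d k / (w1 * w2) * ∑ p ∈ Icc 1 k, γ (k, p) +
      if k = n then π * I / (w1 * w2) * ((γ (n, j) + c) ^ 2 - γ (n, j) ^ 2) +
        π * (w1 + w2) * d n / (w1 * w2) * c else 0 := fun k => by
    rw [hsq, hid]
    split_ifs with hk
    · subst hk; ring
    · ring
  have hK : ∏ m ∈ Icc 1 N, kfac w2 m γ ^ e m =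
      exp (2 * π / w2 * ∑ b ∈ Icc 1 N, (c' n b - c' (n + 1) b) * hfun b γ) := by
    simp only [kfac, ← exp_int_mul, ← exp_sum, mul_sum]
    exact congrArg exp (sum_congr rfl fun m hm => by rw [he m hm, hfun]; ring)
  rw [hK, ← exp_pi_mul_I, ← exp_int_mul]
  simp only [wq, ← exp_sum, hQ, hL, sum_add_distrib, sum_ite_eq', hn, if_true, ← exp_add]
  congr 1
  rw [hd]
  field_simp
  simp only [c]
  linear_combination (2 * π * w1 * (γ (n, j) - ∑ b ∈ Icc 1 N, (c' n b - c' (n + 1) b) * hfun b γ) +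
    π * w1 ^ 2 * (1 - c' n n + 2 * c' n (n + 1) - c' (n + 1) (n + 1)) * I) * I_sq

theorem QGeneric.sinh_ne_zero {N : ℕ} {w1 w2 : ℂ} {d : ℕ} {γ : Pt} (hγ : QGeneric N w1 w2 d γ)
    {m : ℕ} (hm : m ≤ N) :
    ∀ i ∈ Icc 1 m, ∀ j ∈ Icc 1 m, i ≠ j → sinh (2 * π / w2 * (γ (m, i) - γ (m, j))) ≠ 0 := by
  intro i hi j hj hij
  simp only [mem_Icc] at hi hj
  simpa using hγ m i j (by omega) hm hi.1 hi.2 hj.1 hj.2 hij 0 (by simp)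

theorem qpar_sub_inv (w1 w2 : ℂ) : qpar w1 w2 - (qpar w1 w2)⁻¹ = 2 * I * sin (2 * π * w1 / w2) := by
  rw [qpar, ← exp_neg, sin, show 2 * π * I * w1 / w2 = 2 * π * w1 / w2 * I by ring, neg_mul]
  linear_combination (exp (2 * π * w1 / w2 * I) - exp (-(2 * π * w1 / w2 * I))) * I_sq

theorem kfac_inv (w2 : ℂ) (n : ℕ) (γ : Pt) :
    (kfac w2 n γ)⁻¹ =
      exp (2 * π / w2 * (∑ r ∈ Icc 1 (n - 1), γ (n - 1, r) - ∑ j ∈ Icc 1 n, γ (n, j))) := by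
  rw [kfac, ← exp_neg, neg_mul_eq_mul_neg, neg_sub]

theorem uq_whittaker_vector_general (N : ℕ) (w1 w2 : ℂ) (h1 : w1 ≠ 0) (h2 : w2 ≠ 0)
    (c' : ℕ → ℕ → ℂ)
    (hsym : ∀ n m, 1 ≤ n → n ≤ N → 1 ≤ m → m ≤ N → c' n m = c' m n)
    (e : ℕ → ℕ → ℤ)
    (he : ∀ n m, 1 ≤ n → n ≤ N - 1 → 1 ≤ m → m ≤ N →
      ((e n m : ℤ) : ℂ) = c' n m - c' (n + 1) m)
    (d : ℕ → ℤ)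
    (hd : ∀ n, 1 ≤ n → n ≤ N - 1 →
      ((d n : ℤ) : ℂ) = 2 * (n : ℂ) - c' n n + 2 * c' n (n + 1) - c' (n + 1) (n + 1) - 1)
    (n : ℕ) (hn1 : 1 ≤ n) (hn2 : n ≤ N - 1)
    (γ : Pt) (hγ : QGeneric N w1 w2 0 γ) :
    qF w1 w2 n (wq N w1 w2 c' d) γ =
      ((-1 : ℂ) ^ (d n) / (qpar w1 w2 - (qpar w1 w2)⁻¹)) *
        ((kfac w2 n γ)⁻¹ * ∏ m ∈ Finset.Icc 1 N, (kfac w2 m γ) ^ (e n m)) *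
        wq N w1 w2 c' d γ := by
  have hn : n ∈ Icc 1 (N - 1) := mem_Icc.2 ⟨hn1, hn2⟩
  have hshift : ∀ j ∈ Icc 1 n, _ := fun j hj => wq_shift h1 h2
    (fun a ha b hb => hsym a b (mem_Icc.1 ha).1 (mem_Icc.1 ha).2 (mem_Icc.1 hb).1 (mem_Icc.1 hb).2)
    hn (fun m hm => he n m hn1 hn2 (mem_Icc.1 hm).1 (mem_Icc.1 hm).2) (hd n hn1 hn2) hj γ
  have hcard : #(Icc 1 (n - 1)) + 1 = #(Icc 1 n) := by simp only [Nat.card_Icc]; omega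
  have hsum := sum_prod_sinh_div_prod_sinh_mul_exp hcard (2 * π / w2) (I * w1 / 2)
    (fun j => γ (n, j)) (fun r => γ (n - 1, r)) (hγ.sinh_ne_zero (by omega))
  have hcast : ((#(Icc 1 (n - 1)) : ℕ) : ℂ) = n - 1 := by
    rw [Nat.card_Icc, Nat.add_sub_cancel, Nat.cast_sub hn1, Nat.cast_one]
  have hphase : exp (-(π * I * w1 * (n - 1)) / w2) * exp (-(2 * π / w2 * (I * w1 / 2)) * (n - 1)) *
      exp (2 * π * I * w1 * (n - 1) / w2) = 1 := by
    rw [← exp_add, ← exp_add, ← exp_zero]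
    congr 1
    ring
  simp only [qF]
  rw [sum_congr rfl fun j hj => by rw [hshift j hj, ← mul_assoc], ← sum_mul, hsum, hcast,
    ← kfac_inv, qpar_sub_inv]
  set s := sin (2 * π * w1 / w2)
  set K := ∏ m ∈ Icc 1 N, kfac w2 m γ ^ e n m
  set W := wq N w1 w2 c' d γ
  linear_combination (-(I / (2 * s)) * ((-1) ^ d n * (kfac w2 n γ)⁻¹ * K * W)) * hphase -
    (-1) ^ d n * (kfac w2 n γ)⁻¹ * K * W / (2 * s) * inv_I

/-- `w′` is a Whittaker vector for the lowering operators of the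
`U_q(gl(N))` representation: `ϱ(E_{n+1,n}) w′ = (χ′_n/(q − q⁻¹)) ϱ(K_n)⁻¹
∏_{m=1}^N ϱ(K_m)^{c′_{nm} − c′_{n+1,m}} w′`, with `χ′_n = (−1)^{d_n}`, at every
point where all the sinh-denominators occurring are nonzero. -/
theorem uq_whittaker_vector (N : ℕ) (hN : 2 ≤ N) (w1 w2 : ℂ) (h1 : w1 ≠ 0) (h2 : w2 ≠ 0)
    (hsin : Complex.sin (2 * (Real.pi : ℂ) * w1 / w2) ≠ 0)
    (hq2 : (qpar w1 w2) ^ 2 ≠ 1)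
    (c' : ℕ → ℕ → ℂ)
    (hsym : ∀ n m, 1 ≤ n → n ≤ N → 1 ≤ m → m ≤ N → c' n m = c' m n)
    (e : ℕ → ℕ → ℤ)
    (he : ∀ n m, 1 ≤ n → n ≤ N - 1 → 1 ≤ m → m ≤ N →
      ((e n m : ℤ) : ℂ) = c' n m - c' (n + 1) m)
    (d : ℕ → ℤ)
    (hd : ∀ n, 1 ≤ n → n ≤ N - 1 →
      ((d n : ℤ) : ℂ) = 2 * (n : ℂ) - c' n n + 2 * c' n (n + 1) - c' (n + 1) (n + 1) - 1)
    (n : ℕ) (hn1 : 1 ≤ n) (hn2 : n ≤ N - 1)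
    (γ : Pt) (hγ : QGeneric N w1 w2 0 γ) :
    qF w1 w2 n (wq N w1 w2 c' d) γ =
      ((-1 : ℂ) ^ (d n) / (qpar w1 w2 - (qpar w1 w2)⁻¹)) *
        ((kfac w2 n γ)⁻¹ * ∏ m ∈ Finset.Icc 1 N, (kfac w2 m γ) ^ (e n m)) *
        wq N w1 w2 c' d γ :=
  uq_whittaker_vector_general N w1 w2 h1 h2 c' hsym e he d hd n hn1 hn2 γ hγ
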